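/- arXiv:math/9902131 — 2 statements merged into one kernel-verified Lean document; each statement's English description precedes it below -/
import Mathlib

section
/- Let W and U be pseudo-euclidean subspaces of V with W + U = V. If U ∩ W = span{v} for some timelike vector v, then B is positive definite on the subspace W^⊥ + U^⊥, i.e. B x x > 0 for every nonzero x ∈ W^⊥ + U^⊥; consequently, for any two linearly independent vectors n ∈ W^⊥ and m ∈ U^⊥ with B n n = B m m = 1 one has (B n m)² < 1, so any two hyperspheres containing the respective subspheres intersect, and the subspheres are interlaced (cannot be separated by disjoint hyperspheres). -/
/-!
Since `v ∈ U ∩ W`, every vector of `W^⊥ + U^⊥` is orthogonal to the timelike vector `v`, and the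
orthogonal complement of a timelike vector is spacelike: writing vectors as (space, time), the
Euclidean Cauchy–Schwarz inequality forces `|x_t| < ‖x_s‖` whenever `B v x = 0` and `x ≠ 0`. On a
subspace where `B` is positive definite, Cauchy–Schwarz is strict for linearly independent
vectors, which for unit vectors `n, m` reads `(B n m)² < 1`.
-/

noncomputable section

/-- The Minkowski bilinear form of index 1 on `ℝ^{n+2}`:
`B x y = ∑_{i=0}^{n} x i * y i − x (n+1) * y (n+1)`. -/
def mB (n : ℕ) : (Fin (n+2) → ℝ) →ₗ[ℝ] (Fin (n+2) → ℝ) →ₗ[ℝ] ℝ :=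
  LinearMap.mk₂ ℝ
    (fun x y => ∑ i : Fin (n+2), (if (i : ℕ) = n+1 then (-1:ℝ) else 1) * x i * y i)
    (fun x x' y => by
      rw [← Finset.sum_add_distrib]
      exact Finset.sum_congr rfl fun i _ => by simp only [Pi.add_apply]; ring)
    (fun c x y => by
      rw [smul_eq_mul, Finset.mul_sum]
      exact Finset.sum_congr rfl fun i _ => by simp only [Pi.smul_apply, smul_eq_mul]; ring)
    (fun x y y' => by
      rw [← Finset.sum_add_distrib]
      exact Finset.sum_congr rfl fun i _ => by simp only [Pi.add_apply]; ring)
    (fun c x y => by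
      rw [smul_eq_mul, Finset.mul_sum]
      exact Finset.sum_congr rfl fun i _ => by simp only [Pi.smul_apply, smul_eq_mul]; ring)

/-- The orthogonal complement `S^⊥ = {x | ∀ s ∈ S, B x s = 0}` w.r.t. the Minkowski form. -/
def mperp (n : ℕ) (S : Submodule ℝ (Fin (n+2) → ℝ)) : Submodule ℝ (Fin (n+2) → ℝ) where
  carrier := {x | ∀ s ∈ S, mB n x s = 0}
  zero_mem' := fun s _ => by simp
  add_mem' := fun ha hb s hs => by simp [ha s hs, hb s hs]
  smul_mem' := fun c a ha s hs => by simp [ha s hs]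

/-- A subspace is pseudo-euclidean if the Minkowski form restricted to it
is nondegenerate and it contains a timelike vector. -/
def IsPseudoEuclidean (n : ℕ) (S : Submodule ℝ (Fin (n+2) → ℝ)) : Prop :=
  (∀ x ∈ S, (∀ y ∈ S, mB n x y = 0) → x = 0) ∧ ∃ x ∈ S, mB n x x < 0

lemma mB_apply (n : ℕ) (x y : Fin (n+2) → ℝ) :
    mB n x y = ∑ i : Fin (n+2), (if (i : ℕ) = n+1 then (-1:ℝ) else 1) * x i * y i := rfl

lemma mB_isSymm (n : ℕ) : (mB n).IsSymm :=
  ⟨fun x y => by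
    simp only [RingHom.id_apply, mB_apply]
    exact Finset.sum_congr rfl fun i _ => by ring⟩

lemma mB_eq_sum_sub_mul (n : ℕ) (x y : Fin (n+2) → ℝ) :
    mB n x y = (∑ i : Fin (n+1), x i.castSucc * y i.castSucc)
      - x (Fin.last _) * y (Fin.last _) := by
  have hspace (i : Fin (n+1)) : ((i.castSucc : Fin (n+2)) : ℕ) ≠ n+1 := i.isLt.ne
  simp only [mB_apply, Fin.sum_univ_castSucc, Fin.val_last, hspace, if_false, if_true, one_mul]
  ring

lemma sum_mul_self_sub_pos_of_timelike {ι : Type*} [Fintype ι] {a b : ι → ℝ} {s t : ℝ}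
    (ha : ∑ i, a i * a i - s * s < 0) (hab : ∑ i, a i * b i - s * t = 0) (hbt : b ≠ 0 ∨ t ≠ 0) :
    0 < ∑ i, b i * b i - t * t := by
  have hA : 0 ≤ ∑ i, a i * a i := Finset.sum_nonneg fun i _ => mul_self_nonneg _
  have hCS : (s * t) ^ 2 ≤ (∑ i, a i * a i) * ∑ i, b i * b i := by
    simpa only [sq, sub_eq_zero.mp hab] using Finset.sum_mul_sq_le_sq_mul_sq Finset.univ a b
  by_contra! hle
  have ht : t = 0 := by
    have : t * t * (s * s - ∑ i, a i * a i) ≤ 0 := by nlinarith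
    have htt : t * t ≤ 0 := nonpos_of_mul_nonpos_left this (by linarith)
    exact mul_self_eq_zero.mp (le_antisymm htt (mul_self_nonneg t))
  subst ht
  have hb : b = 0 := by
    funext i
    have hsum : ∑ i, b i * b i = 0 :=
      le_antisymm (by linarith) (Finset.sum_nonneg fun i _ => mul_self_nonneg _)
    exact mul_self_eq_zero.mp <|
      (Finset.sum_eq_zero_iff_of_nonneg fun i _ => mul_self_nonneg (b i)).mp hsum i
        (Finset.mem_univ i)
  exact hbt.elim (· hb) (· rfl)

lemma mB_self_pos_of_mB_eq_zero {n : ℕ} {v x : Fin (n+2) → ℝ} (hv : mB n v v < 0)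
    (hvx : mB n v x = 0) (hx : x ≠ 0) : 0 < mB n x x := by
  rw [mB_eq_sum_sub_mul] at hv hvx ⊢
  refine sum_mul_self_sub_pos_of_timelike hv hvx ?_
  by_contra! h
  exact hx <| funext <| Fin.lastCases h.2 fun i => congr_fun h.1 i

lemma mperp_antitone {n : ℕ} {S T : Submodule ℝ (Fin (n+2) → ℝ)} (h : S ≤ T) :
    mperp n T ≤ mperp n S :=
  fun _ hx s hs => hx s (h hs)

lemma sup_mperp_le_mperp_inf (n : ℕ) (S T : Submodule ℝ (Fin (n+2) → ℝ)) :
    mperp n S ⊔ mperp n T ≤ mperp n (S ⊓ T) :=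
  sup_le (mperp_antitone inf_le_left) (mperp_antitone inf_le_right)

lemma mB_self_pos_of_mem_mperp {n : ℕ} {S : Submodule ℝ (Fin (n+2) → ℝ)} {v x : Fin (n+2) → ℝ}
    (hvS : v ∈ S) (hv : mB n v v < 0) (hx : x ∈ mperp n S) (hx0 : x ≠ 0) : 0 < mB n x x :=
  mB_self_pos_of_mB_eq_zero hv (((mB_isSymm n).eq x v).symm.trans (hx v hvS)) hx0

lemma LinearMap.IsSymm.apply_sq_lt_of_linearIndependent_of_mem {R M : Type*} [CommRing R]
    [LinearOrder R] [IsStrictOrderedRing R] [AddCommGroup M] [Module R M] [Module.IsTorsionFree R M]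
    {B : M →ₗ[R] M →ₗ[R] R} (hB : B.IsSymm) {P : Submodule R M}
    (hP : ∀ x ∈ P, x ≠ 0 → 0 < B x x) {x y : M} (hx : x ∈ P) (hy : y ∈ P)
    (hxy : LinearIndependent R ![x, y]) : B x y ^ 2 < B x x * B y y := by
  have hPpos (z : P) (hz : z ≠ 0) : 0 < B.domRestrict₁₂ P P z z := hP z z.2 (by simpa using hz)
  refine (BilinForm.apply_sq_lt_iff_linearIndependent_of_symm _ hPpos (hB.domRestrict P)
    ⟨x, hx⟩ ⟨y, hy⟩).mpr (LinearIndependent.of_comp P.subtype ?_)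
  convert hxy using 1
  ext i
  fin_cases i <;> rfl

theorem interlaced_subspheres_general
    (n : ℕ) (W U : Submodule ℝ (Fin (n+2) → ℝ))
    (v : Fin (n+2) → ℝ) (hv : mB n v v < 0)
    (hinter : U ⊓ W = Submodule.span ℝ {v}) :
    (∀ x ∈ mperp n W ⊔ mperp n U, x ≠ 0 → 0 < mB n x x) ∧
    (∀ nv mv : Fin (n+2) → ℝ, nv ∈ mperp n W → mv ∈ mperp n U →
      mB n nv nv = 1 → mB n mv mv = 1 → LinearIndependent ℝ ![nv, mv] →
      (mB n nv mv)^2 < 1) := by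
  have hvWU : v ∈ W ⊓ U := by
    rw [inf_comm, hinter]
    exact Submodule.mem_span_singleton_self v
  have hpos : ∀ x ∈ mperp n W ⊔ mperp n U, x ≠ 0 → 0 < mB n x x := fun x hx =>
    mB_self_pos_of_mem_mperp hvWU hv (sup_mperp_le_mperp_inf n W U hx)
  refine ⟨hpos, fun nv mv hnv hmv hnn hmm hind => ?_⟩
  simpa [hnn, hmm] using (mB_isSymm n).apply_sq_lt_of_linearIndependent_of_mem hpos
    (Submodule.mem_sup_left hnv) (Submodule.mem_sup_right hmv) hind

/-- If `U ∩ W` is spanned by a timelike vector (case 3), then the Minkowski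
form is positive definite on `W^⊥ + U^⊥`; hence any two hyperspheres containing
the respective subspheres intersect, and the subspheres are interlaced. -/
theorem interlaced_subspheres
    (n : ℕ) (hn : 0 < n) (W U : Submodule ℝ (Fin (n+2) → ℝ))
    (hW : IsPseudoEuclidean n W) (hU : IsPseudoEuclidean n U)
    (hsum : W ⊔ U = ⊤) (v : Fin (n+2) → ℝ) (hv : mB n v v < 0)
    (hinter : U ⊓ W = Submodule.span ℝ {v}) :
    (∀ x ∈ mperp n W ⊔ mperp n U, x ≠ 0 → 0 < mB n x x) ∧
    (∀ nv mv : Fin (n+2) → ℝ, nv ∈ mperp n W → mv ∈ mperp n U →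
      mB n nv nv = 1 → mB n mv mv = 1 → LinearIndependent ℝ ![nv, mv] →
      (mB n nv mv)^2 < 1) :=
  interlaced_subspheres_general n W U v hv hinter
end
end

section
/- Let W and Ŵ be pseudo-euclidean subspaces of V with dim W = dim Ŵ. Then there exists a linear equivalence g : V → V with B (g x) (g y) = B x y for all x, y ∈ V and g(W) = Ŵ; that is, the pseudo-orthogonal group O(n+1,1) of B acts transitively on the set of (m+2)-dimensional pseudo-euclidean subspaces of V, and hence the Möbius group acts transitively on the set of all m-spheres of the Möbius space S^n for each m. -/
noncomputable section

lemma mB_symm (n : ℕ) (x y : Fin (n+2) → ℝ) : mB n x y = mB n y x := by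
  rw [mB_apply, mB_apply]
  exact Finset.sum_congr rfl fun i _ => by ring

lemma mB_single (n : ℕ) (x : Fin (n+2) → ℝ) (j : Fin (n+2)) :
    mB n x (Pi.single j 1) = (if (j : ℕ) = n+1 then (-1:ℝ) else 1) * x j := by
  rw [mB_apply]
  rw [Finset.sum_eq_single j]
  · simp
  · intro i _ hij
    simp [Pi.single_apply, hij]
  · simp

lemma mB_nondeg (n : ℕ) : ∀ x, (∀ y, mB n x y = 0) → x = 0 := by
  intro x hx
  funext j
  have h0 := hx (Pi.single j 1)
  rw [mB_single] at h0
  show x j = 0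
  rcases ite_eq_or_eq ((j:ℕ) = n+1) (-1:ℝ) 1 with h | h <;> rw [h] at h0 <;> linarith

/-- If the last coordinate vanishes, the form is nonnegative. -/
lemma mB_nonneg_of_last (n : ℕ) (x : Fin (n+2) → ℝ) (h : x ⟨n+1, by omega⟩ = 0) :
    0 ≤ mB n x x := by
  rw [mB_apply]
  apply Finset.sum_nonneg
  intro i _
  by_cases hi : (i : ℕ) = n+1
  · have : i = ⟨n+1, by omega⟩ := Fin.ext hi
    simp [this, h]
  · simp only [hi, if_false, one_mul]
    exact mul_self_nonneg _

/-- No two orthogonal timelike vectors. -/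
lemma mB_no_two_neg (n : ℕ) {v w : Fin (n+2) → ℝ} (hv : mB n v v < 0) (hw : mB n w w < 0)
    (hvw : mB n v w = 0) : False := by
  set N : Fin (n+2) := ⟨n+1, by omega⟩
  set a : ℝ := w N
  set b : ℝ := -(v N)
  have hwv : mB n w v = 0 := by rw [mB_symm]; exact hvw
  by_cases hab : a = 0 ∧ b = 0
  · have : 0 ≤ mB n w w := mB_nonneg_of_last n w hab.1
    linarith
  · set x : Fin (n+2) → ℝ := a • v + b • w with hx
    have hxN : x N = 0 := by simp [hx, a, b]; ring
    have hnonneg : 0 ≤ mB n x x := mB_nonneg_of_last n x hxN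
    have hval : mB n x x = a^2 * mB n v v + b^2 * mB n w w := by
      simp [hx, map_add, map_smul, hvw, hwv]
      ring
    have ha2 : 0 ≤ a^2 := sq_nonneg a
    have hb2 : 0 ≤ b^2 := sq_nonneg b
    rcases not_and_or.mp hab with h | h
    · have : 0 < a^2 := by positivity
      nlinarith
    · have : 0 < b^2 := by positivity
      nlinarith

lemma mB_sum_sq (n m : ℕ) (v : Fin m → (Fin (n+2) → ℝ)) (c : Fin m → ℝ)
    (h : ∀ i j, i ≠ j → mB n (v i) (v j) = 0) :
    mB n (∑ i, c i • v i) (∑ i, c i • v i) = ∑ i, c i * c i * mB n (v i) (v i) := by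
  simp only [map_sum, map_smul, LinearMap.sum_apply, LinearMap.smul_apply, smul_eq_mul]
  refine Finset.sum_congr rfl fun i _ => ?_
  rw [Finset.sum_eq_single i]
  · ring
  · intro j _ hj
    rw [h j i hj]; ring
  · simp



open LinearMap in
lemma exists_adapted (n d : ℕ) (hd : d ≤ n+2) (S : Submodule ℝ (Fin (n+2) → ℝ))
    (hS : IsPseudoEuclidean n S) (hrank : Module.finrank ℝ S = d) :
    ∃ b : Module.Basis (Fin (n+2)) ℝ (Fin (n+2) → ℝ),
      (∀ i j, mB n (b i) (b j) = (if i = j then (if (i:ℕ) = 0 then (-1:ℝ) else 1) else 0)) ∧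
      S = Submodule.span ℝ (Set.range fun i : Fin d => b (Fin.castLE hd i)) := by
  classical
  have hsymm : (mB n).IsSymm := mB_isSymm n
  have hrsymm : (LinearMap.BilinForm.restrict (mB n) S).IsSymm := LinearMap.BilinForm.IsSymm.restrict (LinearMap.BilinForm.isSymm_iff.2 hsymm) S
  have hrnd : (LinearMap.BilinForm.restrict (mB n) S).Nondegenerate := by
    suffices hL : LinearMap.SeparatingLeft (LinearMap.BilinForm.restrict (mB n) S) from
      ⟨hL, fun x hx => hL x fun y => (mB_symm n x.1 y.1).trans (hx y)⟩
    intro x hx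
    exact Subtype.ext (hS.1 x.1 x.2 fun y hy => hx ⟨y, hy⟩)
  obtain ⟨v0, hv0⟩ := LinearMap.BilinForm.exists_orthogonal_basis (LinearMap.BilinForm.isSymm_iff.1 hrsymm)
  set v : Module.Basis (Fin d) ℝ S := v0.reindex (finCongr hrank) with hvdef
  have hvorth : ∀ i j : Fin d, i ≠ j → mB n ((v i : Fin (n+2) → ℝ)) (v j) = 0 := by
    intro i j hij
    have h1 := hv0 (show (finCongr hrank).symm i ≠ (finCongr hrank).symm j from
      fun h => hij (by simpa using congrArg (finCongr hrank) h))
    simpa [hvdef, Module.Basis.reindex_apply] using h1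
  have hvO : (LinearMap.BilinForm.restrict (mB n) S).IsOrthoᵢ ⇑v := by
    intro i j hij
    simpa using hvorth i j hij
  have hdne : ∀ i, mB n ((v i : Fin (n+2) → ℝ)) (v i) ≠ 0 := by
    intro i h
    exact LinearMap.BilinForm.iIsOrtho.not_isOrtho_basis_self_of_nondegenerate hvO hrnd i
      (by simpa using h)
  obtain ⟨x, hxS, hxneg⟩ := hS.2
  have hrep : ∀ y : S, (y : Fin (n+2) → ℝ) = ∑ j, v.repr y j • ((v j : Fin (n+2) → ℝ)) := by
    intro y
    have h1 : (y : Fin (n+2) → ℝ) = ((∑ j, v.repr y j • v j : S) : Fin (n+2) → ℝ) := by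
      rw [v.sum_repr y]
    exact h1.trans (by simp only [Submodule.coe_sum, Submodule.coe_smul])
  obtain ⟨i₀, hi₀⟩ : ∃ i, mB n ((v i : Fin (n+2) → ℝ)) (v i) < 0 := by
    by_contra hc
    push_neg at hc
    have h2 : 0 ≤ mB n x x := by
      have hx1 : x = ∑ j, v.repr ⟨x, hxS⟩ j • ((v j : Fin (n+2) → ℝ)) := hrep ⟨x, hxS⟩
      rw [hx1, mB_sum_sq n d _ _ hvorth]
      exact Finset.sum_nonneg fun i _ => mul_nonneg (mul_self_nonneg _) (hc i)
    linarith
  have hpos : ∀ j, j ≠ i₀ → 0 < mB n ((v j : Fin (n+2) → ℝ)) (v j) := by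
    intro j hj
    rcases (hdne j).lt_or_gt with h | h
    · exact (mB_no_two_neg n hi₀ h (hvorth i₀ j (Ne.symm hj))).elim
    · exact h
  have hd0 : 0 < d := i₀.pos
  set z : Fin d := ⟨0, hd0⟩ with hzdef
  set σ : Equiv.Perm (Fin d) := Equiv.swap z i₀ with hσdef
  set c : Fin d → ℝ := fun i => mB n ((v i : Fin (n+2) → ℝ)) (v i) with hcdef
  have hcfold : ∀ i, mB n ((v i : Fin (n+2) → ℝ)) (v i) = c i := fun i => rfl
  have hcne : ∀ k, c k ≠ 0 := fun k => by rw [← hcfold k]; exact hdne k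
  have hci₀ : c i₀ < 0 := by rw [← hcfold]; exact hi₀
  have hcpos : ∀ j, j ≠ i₀ → 0 < c j := fun j hj => by rw [← hcfold]; exact hpos j hj
  have hsq : ∀ k, Real.sqrt |c k| ≠ 0 := by
    intro k
    rw [Real.sqrt_ne_zero' ]
    exact abs_pos.mpr (hdne k)
  set w : Fin d → (Fin (n+2) → ℝ) :=
    fun i => (Real.sqrt |c (σ i)|)⁻¹ • ((v (σ i) : Fin (n+2) → ℝ)) with hwdef
  have hkey : ∀ k : Fin d,
      (Real.sqrt |c k|)⁻¹ * ((Real.sqrt |c k|)⁻¹ * c k) = if k = i₀ then (-1:ℝ) else 1 := by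
    intro k
    have habs : Real.sqrt |c k| * Real.sqrt |c k| = |c k| := Real.mul_self_sqrt (abs_nonneg _)
    have h2 : (Real.sqrt |c k|)⁻¹ * ((Real.sqrt |c k|)⁻¹ * c k) = c k / |c k| := by
      rw [eq_div_iff (abs_ne_zero.mpr (hcne k)), ← habs]
      field_simp
      rw [Real.sqrt_sq (Real.sqrt_nonneg _)]; field_simp [pow_ne_zero 2 (hsq k)]; exact mul_div_cancel_left₀ _ (hsq k)
    rw [h2]
    by_cases hk : k = i₀
    · subst hk
      rw [if_pos rfl, abs_of_neg hci₀, div_neg, div_self (ne_of_lt hci₀)]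
    · rw [if_neg hk, abs_of_pos (hcpos k hk), div_self (ne_of_gt (hcpos k hk))]
  have hσz : ∀ i : Fin d, σ i = i₀ ↔ i = z := by
    intro i
    constructor
    · intro h
      have : σ i = σ z := by rw [h, hσdef, Equiv.swap_apply_left]
      exact σ.injective this
    · intro h; rw [h, hσdef, Equiv.swap_apply_left]
  have hgram : ∀ i j, mB n (w i) (w j) =
      if i = j then (if (i:ℕ) = 0 then (-1:ℝ) else 1) else 0 := by
    intro i j
    by_cases hij : i = j
    · subst hij
      rw [if_pos rfl, hwdef]
      simp only [map_smul, LinearMap.smul_apply, smul_eq_mul]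
      rw [hcfold (σ i), hkey (σ i)]
      have : σ i = i₀ ↔ (i:ℕ) = 0 := by
        rw [hσz i, hzdef, Fin.ext_iff]
      by_cases h0 : (i:ℕ) = 0
      · rw [if_pos (this.mpr h0), if_pos h0]
      · rw [if_neg (fun hh => h0 (this.mp hh)), if_neg h0]
    · rw [if_neg hij, hwdef]
      simp only [map_smul, LinearMap.smul_apply, smul_eq_mul]
      rw [hvorth _ _ (fun h => hij (σ.injective h))]
      ring
  have hwmem : ∀ i, w i ∈ S := fun i => S.smul_mem _ (v (σ i)).2
  have hspan : Submodule.span ℝ (Set.range w) = S := by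
    apply le_antisymm
    · rw [Submodule.span_le]; rintro _ ⟨i, rfl⟩; exact hwmem i
    · intro y hy
      have hv_mem : ∀ j, ((v j : Fin (n+2) → ℝ)) ∈ Submodule.span ℝ (Set.range w) := by
        intro j
        have hww : ((v j : Fin (n+2) → ℝ)) = Real.sqrt |c j| • w (σ j) := by
          rw [hwdef]
          simp only [Equiv.swap_apply_self, hσdef]
          rw [smul_inv_smul₀ (hsq j)]
        rw [hww]
        exact Submodule.smul_mem _ _ (Submodule.subset_span ⟨σ j, rfl⟩)
      have h1 : y = ∑ j, v.repr ⟨y, hy⟩ j • ((v j : Fin (n+2) → ℝ)) := hrep ⟨y, hy⟩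
      rw [h1]
      exact Submodule.sum_mem _ fun j _ => Submodule.smul_mem _ _ (hv_mem j)
  -- orthogonal complement
  set P : Submodule ℝ (Fin (n+2) → ℝ) := LinearMap.BilinForm.orthogonal (mB n) S with hPdef
  have hrefl : (mB n).IsRefl := hsymm.isRefl
  have hcompl : IsCompl S P :=
    LinearMap.BilinForm.isCompl_orthogonal_of_restrict_nondegenerate hrefl hrnd
  have hSP : ∀ s ∈ S, ∀ p ∈ P, mB n s p = 0 := fun s hs p hp => hp s hs
  have hde : d + Module.finrank ℝ P = n + 2 := by
    rw [← hrank, Submodule.finrank_add_eq_of_isCompl hcompl, Module.finrank_fin_fun]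
  have hPnd : (LinearMap.BilinForm.restrict (mB n) P).Nondegenerate := by
    suffices hL : LinearMap.SeparatingLeft (LinearMap.BilinForm.restrict (mB n) P) from
      ⟨hL, fun x hx => hL x fun y => (mB_symm n x.1 y.1).trans (hx y)⟩
    intro xP hxP
    refine Subtype.ext (mB_nondeg n xP.1 fun y => ?_)
    have hy : y ∈ S ⊔ P := by rw [hcompl.sup_eq_top]; trivial
    obtain ⟨s, hs, p, hp, rfl⟩ := Submodule.mem_sup.mp hy
    rw [map_add]
    have h1 : mB n xP.1 s = 0 := hrefl s xP.1 (hSP s hs xP.1 xP.2)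
    have h2 : mB n xP.1 p = 0 := by simpa using hxP ⟨p, hp⟩
    rw [h1, h2, add_zero]
  have hPsymm : (LinearMap.BilinForm.restrict (mB n) P).IsSymm := LinearMap.BilinForm.IsSymm.restrict (LinearMap.BilinForm.isSymm_iff.2 hsymm) P
  set e := Module.finrank ℝ P with hedef
  obtain ⟨u0, hu0⟩ := LinearMap.BilinForm.exists_orthogonal_basis (LinearMap.BilinForm.isSymm_iff.1 hPsymm)
  have huorth : ∀ i j : Fin e, i ≠ j → mB n ((u0 i : Fin (n+2) → ℝ)) (u0 j) = 0 := by
    intro i j hij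
    exact hu0 (show i ≠ j from hij)
  have hudne : ∀ j, mB n ((u0 j : Fin (n+2) → ℝ)) (u0 j) ≠ 0 := by
    intro j h
    exact LinearMap.BilinForm.iIsOrtho.not_isOrtho_basis_self_of_nondegenerate hu0 hPnd j h
  have hupos : ∀ j, 0 < mB n ((u0 j : Fin (n+2) → ℝ)) (u0 j) := by
    intro j
    rcases (hudne j).lt_or_gt with h | h
    · have hw0 : mB n (w z) (w z) < 0 := by
        rw [hgram z z, if_pos rfl, hzdef, if_pos rfl]; norm_num
      have h0 : mB n (w z) ((u0 j : Fin (n+2) → ℝ)) = 0 := hSP _ (hwmem _) _ (u0 j).2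
      exact (mB_no_two_neg n hw0 h h0).elim
    · exact h
  set uu : Fin e → (Fin (n+2) → ℝ) :=
    fun j => (Real.sqrt (mB n ((u0 j : Fin (n+2) → ℝ)) (u0 j)))⁻¹ • (u0 j : Fin (n+2) → ℝ)
    with huudef
  have huugram : ∀ a b, mB n (uu a) (uu b) = if a = b then (1:ℝ) else 0 := by
    intro a b
    by_cases hab : a = b
    · subst hab
      rw [if_pos rfl, huudef]
      simp only [map_smul, LinearMap.smul_apply, smul_eq_mul]
      set q := mB n ((u0 a : Fin (n+2) → ℝ)) (u0 a)
      have hq : 0 < q := hupos a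
      have habs : Real.sqrt q * Real.sqrt q = q := Real.mul_self_sqrt hq.le
      have hsqq : Real.sqrt q ≠ 0 := by positivity
      field_simp
      rw [Real.sq_sqrt hq.le]
    · rw [if_neg hab, huudef]
      simp only [map_smul, LinearMap.smul_apply, smul_eq_mul]
      rw [huorth a b hab]
      ring
  have huumem : ∀ j, uu j ∈ P := fun j => P.smul_mem _ (u0 j).2
  -- combined family
  set F : Fin (n+2) → (Fin (n+2) → ℝ) :=
    fun i => if h : (i:ℕ) < d then w ⟨(i:ℕ), h⟩ else uu ⟨(i:ℕ) - d, by omega⟩ with hFdef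
  have hcross : ∀ (a : Fin d) (b : Fin e), mB n (w a) (uu b) = 0 :=
    fun a b => hSP _ (hwmem a) _ (huumem b)
  have hFgram : ∀ i j, mB n (F i) (F j) =
      if i = j then (if (i:ℕ) = 0 then (-1:ℝ) else 1) else 0 := by
    intro i j
    by_cases hi : (i:ℕ) < d <;> by_cases hj : (j:ℕ) < d
    · rw [hFdef]
      simp only [dif_pos hi, dif_pos hj]
      rw [hgram]
      by_cases hij : i = j
      · subst hij
        simp
      · rw [if_neg hij, if_neg (show ¬(⟨(i:ℕ),hi⟩:Fin d) = ⟨(j:ℕ),hj⟩ from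
          fun h => hij (by simpa [Fin.ext_iff] using h))]
    · rw [hFdef]
      simp only [dif_pos hi, dif_neg hj]
      rw [hcross, if_neg (show ¬i = j from fun h => hj (by rw [← h]; exact hi))]
    · rw [hFdef]
      simp only [dif_neg hi, dif_pos hj]
      rw [mB_symm, hcross, if_neg (show ¬i = j from fun h => hi (by rw [h]; exact hj))]
    · rw [hFdef]
      simp only [dif_neg hi, dif_neg hj]
      rw [huugram]
      by_cases hij : i = j
      · subst hij
        rw [if_pos rfl, if_pos rfl, if_neg (by omega : ¬ (i:ℕ) = 0)]
      · have : (⟨(i:ℕ) - d, by omega⟩ : Fin e) ≠ ⟨(j:ℕ) - d, by omega⟩ := by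
          intro h
          apply hij
          have := congrArg Fin.val h
          simp only at this
          exact Fin.ext (by omega)
        rw [if_neg this, if_neg hij]
  have hFli : LinearIndependent ℝ F := by
    apply LinearMap.BilinForm.linearIndependent_of_iIsOrtho (B := mB n)
    · intro i j hij
      show mB n (F i) (F j) = 0
      rw [hFgram, if_neg hij]
    · intro i h
      have h1 : mB n (F i) (F i) = 0 := h
      rw [hFgram, if_pos rfl] at h1
      by_cases h0 : (i:ℕ) = 0 <;> simp [h0] at h1
  have hcard : Fintype.card (Fin (n+2)) = Module.finrank ℝ (Fin (n+2) → ℝ) := by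
    simp [Module.finrank_fin_fun]
  set b := basisOfLinearIndependentOfCardEqFinrank hFli hcard with hbdef
  have hb : ⇑b = F := coe_basisOfLinearIndependentOfCardEqFinrank _ _
  refine ⟨b, ?_, ?_⟩
  · intro i j
    rw [congrFun hb i, congrFun hb j]
    exact hFgram i j
  · have hfw : (fun i : Fin d => b (Fin.castLE hd i)) = w := by
      funext i
      rw [congrFun hb _, hFdef]
      have hlt : ((Fin.castLE hd i : Fin (n+2)) : ℕ) < d := by
        simpa using i.2
      simp only [dif_pos hlt]
      congr 1
    rw [hfw, hspan]


/-- The pseudo-orthogonal group of the Minkowski form acts transitively on the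
set of pseudo-euclidean subspaces of a fixed dimension; hence the Möbius group
acts transitively on the set of all `m`-spheres of the Möbius space `Sⁿ`. -/
theorem transitive_on_pseudo_euclidean_subspaces
    (n : ℕ) (hn : 0 < n) (W W' : Submodule ℝ (Fin (n+2) → ℝ))
    (hW : IsPseudoEuclidean n W) (hW' : IsPseudoEuclidean n W')
    (hdim : Module.finrank ℝ W = Module.finrank ℝ W') :
    ∃ g : (Fin (n+2) → ℝ) ≃ₗ[ℝ] (Fin (n+2) → ℝ),
      (∀ x y, mB n (g x) (g y) = mB n x y) ∧ W.map g.toLinearMap = W' := by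
  classical
  have hd : Module.finrank ℝ W ≤ n + 2 := by
    have h1 := Submodule.finrank_le W
    rwa [Module.finrank_fin_fun] at h1
  obtain ⟨b, hb, hbs⟩ := exists_adapted n (Module.finrank ℝ W) hd W hW rfl
  obtain ⟨b', hb', hbs'⟩ := exists_adapted n (Module.finrank ℝ W) hd W' hW' hdim.symm
  set g := b.equiv b' (Equiv.refl _) with hgdef
  have hgb : ∀ i, g (b i) = b' i := fun i => by
    rw [hgdef, Module.Basis.equiv_apply]; rfl
  refine ⟨g, ?_, ?_⟩
  · have key : (mB n).compl₁₂ g.toLinearMap g.toLinearMap = mB n := by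
      refine b.ext fun i => b.ext fun j => ?_
      rw [LinearMap.compl₁₂_apply]
      show mB n (g (b i)) (g (b j)) = mB n (b i) (b j)
      rw [hgb i, hgb j, hb' i j, hb i j]
    intro x y
    have h1 := LinearMap.congr_fun key x
    have h2 := LinearMap.congr_fun h1 y
    simpa using h2
  · rw [hbs, Submodule.map_span, ← Set.range_comp, hbs']
    have hcomp : (⇑g.toLinearMap ∘ fun i => b (Fin.castLE hd i))
        = fun i => b' (Fin.castLE hd i) := funext fun i => hgb _
    rw [hcomp]
end
end
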